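/- Let f : ℕ → ℕ be injective and let G be the group with presentation ⟨ a_i, b_i, c_i (i ∈ ℕ) | c_{f(i)} = a_{f(i)}^i b_{f(i)}^i (i ∈ ℕ) ⟩. Then for all k ∈ ℕ and x, y ∈ ℤ, the equality c_k = a_k^x b_k^y holds in G if and only if there exists i ∈ ℕ with f(i) = k and x = y = i. In particular, the equation c_k = a_k^x b_k^y has an integer solution (x,y) if and only if k lies in the range of f, and in that case the solution is unique. -/

import Mathlib

/-!
Every relation of the presentation holds in `ℤ³` under `a_j ↦ (1, 0, 0)`, `b_j ↦ (0, 1, 0)`,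
`c_{f(i)} ↦ (i, i, 0)` and `c_j ↦ (0, 0, 1)` for `j` outside the range of `f`; injectivity of `f`
makes the image of `c_j` well defined. Applying this homomorphism to `c_k = a_k^x b_k^y` reads off
`(x, y, 0)` as the image of `c_k`, which forces `k = f(i)` and `x = y = i`.
-/

/-- The relators `c_{f(i)}⁻¹ a_{f(i)}^i b_{f(i)}^i` (`i ∈ ℕ`) of the presentation
`⟨ aᵢ, bᵢ, cᵢ (i ∈ ℕ) | c_{f(i)} = a_{f(i)}^i b_{f(i)}^i (i ∈ ℕ) ⟩`.
The generator `a_j` is `(j, 0)`, `b_j` is `(j, 1)` and `c_j` is `(j, 2)`. -/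
def abcRels (f : ℕ → ℕ) : Set (FreeGroup (ℕ × Fin 3)) :=
  Set.range fun i =>
    (FreeGroup.of (f i, (2 : Fin 3)))⁻¹ *
      FreeGroup.of (f i, (0 : Fin 3)) ^ i * FreeGroup.of (f i, (1 : Fin 3)) ^ i

/-- The group `⟨ aᵢ, bᵢ, cᵢ (i ∈ ℕ) | c_{f(i)} = a_{f(i)}^i b_{f(i)}^i (i ∈ ℕ) ⟩`. -/
abbrev ABCGroup (f : ℕ → ℕ) := PresentedGroup (abcRels f)

/-- The image of the generator `(j, t)` in `ABCGroup f` (`t = 0, 1, 2` for `a_j, b_j, c_j`). -/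
def abcGen (f : ℕ → ℕ) (x : ℕ × Fin 3) : ABCGroup f := PresentedGroup.of x

namespace ABCGroup

theorem abcGen_two_eq (f : ℕ → ℕ) (i : ℕ) :
    abcGen f (f i, 2) = abcGen f (f i, 0) ^ i * abcGen f (f i, 1) ^ i := by
  have h := PresentedGroup.one_of_mem (rels := abcRels f) ⟨i, rfl⟩
  simp only [map_mul, map_inv, map_pow, mul_assoc, inv_mul_eq_one] at h
  exact h

variable {f : ℕ → ℕ}

section lift

variable {G : Type*} [Group G] (g : ℕ × Fin 3 → G)
  (hg : ∀ i, g (f i, 2) = g (f i, 0) ^ i * g (f i, 1) ^ i)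

def lift : ABCGroup f →* G :=
  PresentedGroup.toGroup (f := g) <| by
    rintro _ ⟨i, rfl⟩
    simp [hg i]

@[simp]
theorem lift_abcGen (x : ℕ × Fin 3) : lift g hg (abcGen f x) = g x :=
  PresentedGroup.toGroup.of _

end lift

open Function

noncomputable def cExponent (f : ℕ → ℕ) (j : ℕ) : ℤ × ℤ × ℤ :=
  (partialInv f j).elim (0, 0, 1) fun i => ((i : ℤ), (i : ℤ), 0)

theorem cExponent_apply_self (hf : Injective f) (i : ℕ) :
    cExponent f (f i) = ((i : ℤ), (i : ℤ), 0) := by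
  simp [cExponent, partialInv_left hf]

theorem cExponent_eq_iff (hf : Injective f) {k : ℕ} {x y : ℤ} :
    cExponent f k = (x, y, 0) ↔ ∃ i : ℕ, f i = k ∧ x = i ∧ y = i := by
  rcases h : partialInv f k with _ | i
  · have hk : ∀ i, f i ≠ k := fun i hi => by simp [← hi, partialInv_left hf] at h
    simp [cExponent, h, hk]
  · obtain rfl := (hf.isPartialInv i k).1 h
    simp [cExponent, h, hf.eq_iff, eq_comm]

noncomputable def exponents (f : ℕ → ℕ) : ℕ × Fin 3 → Multiplicative (ℤ × ℤ × ℤ)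
  | (_, 0) => .ofAdd (1, 0, 0)
  | (_, 1) => .ofAdd (0, 1, 0)
  | (j, 2) => .ofAdd (cExponent f j)

theorem exponents_two_eq (hf : Injective f) (i : ℕ) :
    exponents f (f i, 2) = exponents f (f i, 0) ^ i * exponents f (f i, 1) ^ i := by
  simp only [exponents, cExponent_apply_self hf, ← ofAdd_nsmul, ← ofAdd_add]
  simp

end ABCGroup

theorem abcGroup_ck_eq_pow_iff (f : ℕ → ℕ) (hf : Function.Injective f) (k : ℕ) (x y : ℤ) :
    abcGen f (k, 2) = abcGen f (k, 0) ^ x * abcGen f (k, 1) ^ y ↔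
      ∃ i : ℕ, f i = k ∧ x = i ∧ y = i := by
  refine ⟨fun h => ?_, ?_⟩
  · have h' := congrArg (ABCGroup.lift _ (ABCGroup.exponents_two_eq hf)) h
    simp only [map_mul, map_zpow, ABCGroup.lift_abcGen, ABCGroup.exponents, ← ofAdd_zsmul,
      ← ofAdd_add] at h'
    rw [← ABCGroup.cExponent_eq_iff hf, Multiplicative.ofAdd.injective h']
    simp
  · rintro ⟨i, rfl, rfl, rfl⟩
    simpa using ABCGroup.abcGen_two_eq f i
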